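/- Let z ∈ ℤ[ω] with N(z) = A·B where A, B are positive integers and A = r²t with t having no prime divisor ≡ 2 (mod 3). Then there exist f, g ∈ ℤ[ω] with z = f·g, N(f) = A, and N(g) = B. -/

import Mathlib

/-!
Since ℤ[ω] is Euclidean, every prime `p` dividing `N z` has a prime factor `π ∣ z` with
`π ∣ p`, so `N π ∈ {p, p²}`. Norms are never `2 mod 3`, so for `p ≡ 2 (mod 3)` we get
`π ~ p` and `p ∣ z`. For `p ≢ 2 (mod 3)`, `p` divides some `c² + c + 1 = N (c - ω)` without
dividing `c - ω`, so `p` is not prime in ℤ[ω] and `N π = p`. Hence a factor of norm `A` can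
be split off `z` one prime (for `t`) or one prime square (for `r²`) at a time.
-/

noncomputable def ω : ℂ := (-1 + Real.sqrt 3 * Complex.I) / 2

noncomputable def Eisen : Subring ℂ := Subring.closure {ω}

open Complex

lemma omega_sq : ω ^ 2 = -1 - ω := by
  have h3 : (Real.sqrt 3 : ℂ) ^ 2 = 3 := by
    exact_mod_cast Real.sq_sqrt (by norm_num : (0 : ℝ) ≤ 3)
  rw [ω]
  linear_combination (-1 / 4 : ℂ) * h3 + ((Real.sqrt 3 : ℂ) ^ 2 / 4) * I_sq

lemma conj_omega : starRingEnd ℂ ω = -1 - ω := by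
  simp only [ω, map_div₀, map_add, map_neg, map_one, map_mul, conj_ofReal, conj_I, map_ofNat]
  ring

lemma normSq_add_mul_omega (s t : ℝ) : normSq (s + t * ω) = s ^ 2 - s * t + t ^ 2 := by
  have h3 : Real.sqrt 3 ^ 2 = 3 := Real.sq_sqrt (by norm_num)
  simp [normSq_apply, ω]
  linear_combination (t ^ 2 / 4) * h3

lemma omega_mem_Eisen : ω ∈ Eisen := Subring.subset_closure rfl

lemma mem_Eisen_iff {x : ℂ} : x ∈ Eisen ↔ ∃ a b : ℤ, x = a + b * ω := by
  constructor
  · intro hx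
    induction hx using Subring.closure_induction with
    | mem x hx => exact ⟨0, 1, by rw [Set.mem_singleton_iff.mp hx]; simp⟩
    | zero => exact ⟨0, 0, by simp⟩
    | one => exact ⟨1, 0, by simp⟩
    | add x y _ _ hx hy =>
      obtain ⟨a, b, rfl⟩ := hx
      obtain ⟨c, d, rfl⟩ := hy
      exact ⟨a + c, b + d, by push_cast; ring⟩
    | neg x _ hx =>
      obtain ⟨a, b, rfl⟩ := hx
      exact ⟨-a, -b, by push_cast; ring⟩
    | mul x y _ _ hx hy =>
      obtain ⟨a, b, rfl⟩ := hx
      obtain ⟨c, d, rfl⟩ := hy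
      refine ⟨a * c - b * d, a * d + b * c - b * d, ?_⟩
      push_cast
      linear_combination (b * d : ℂ) * omega_sq
  · rintro ⟨a, b, rfl⟩
    exact add_mem (intCast_mem _ a) (mul_mem (intCast_mem _ b) omega_mem_Eisen)

lemma exists_dvd_sq_add_add_one {p : ℕ} (hp : p.Prime) (hp3 : p % 3 ≠ 2) :
    ∃ c : ℤ, (p : ℤ) ∣ c ^ 2 + c + 1 := by
  rcases (by omega : p % 3 = 0 ∨ p % 3 = 1) with h0 | h1
  · obtain rfl : p = 3 := ((Nat.prime_dvd_prime_iff_eq Nat.prime_three hp).mp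
      (Nat.dvd_of_mod_eq_zero h0)).symm
    exact ⟨1, by norm_num⟩
  · have := Fact.mk hp
    have := Fact.mk Nat.prime_three
    have h3 : 3 ∣ Fintype.card (ZMod p)ˣ := by rw [ZMod.card_units]; omega
    obtain ⟨g, hg⟩ := exists_prime_orderOf_dvd_card 3 h3
    have hζ : IsPrimitiveRoot (g : ZMod p) 3 := by
      rw [← hg, ← orderOf_units]; exact IsPrimitiveRoot.orderOf _
    refine ⟨(g : ZMod p).val, ?_⟩
    rw [← ZMod.intCast_zmod_eq_zero_iff_dvd]
    push_cast
    rw [ZMod.natCast_zmod_val]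
    have hsum := hζ.geom_sum_eq_zero (by norm_num)
    simp only [Finset.sum_range_succ, Finset.sum_range_zero] at hsum
    linear_combination hsum

namespace Eisen

lemma conj_mem {x : ℂ} (hx : x ∈ Eisen) : starRingEnd ℂ x ∈ Eisen := by
  obtain ⟨a, b, rfl⟩ := mem_Eisen_iff.mp hx
  refine mem_Eisen_iff.mpr ⟨a - b, -b, ?_⟩
  simp only [map_add, map_mul, map_intCast, conj_omega]
  push_cast
  ring

noncomputable def conj : Eisen ≃+* Eisen :=
  RingEquiv.restrict starRingAut Eisen Eisen fun x =>
    ⟨conj_mem, fun h => by simpa using conj_mem h⟩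

@[simp]
lemma coe_conj (z : Eisen) : (conj z : ℂ) = starRingEnd ℂ z := rfl

lemma exists_normSq_eq (z : Eisen) :
    ∃ a b : ℤ, normSq (z : ℂ) = ((a ^ 2 - a * b + b ^ 2 : ℤ) : ℝ) := by
  obtain ⟨a, b, hab⟩ := mem_Eisen_iff.mp z.2
  refine ⟨a, b, ?_⟩
  rw [hab, show ((a : ℂ) + b * ω) = ((a : ℝ) : ℂ) + ((b : ℝ) : ℂ) * ω by push_cast; rfl,
    normSq_add_mul_omega]
  push_cast
  ring

lemma natCast_floor_normSq (z : Eisen) : (⌊normSq (z : ℂ)⌋₊ : ℝ) = normSq (z : ℂ) := by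
  obtain ⟨a, b, h⟩ := exists_normSq_eq z
  have hnonneg : 0 ≤ a ^ 2 - a * b + b ^ 2 := by
    nlinarith [sq_nonneg (a - b), sq_nonneg a, sq_nonneg b]
  rw [h, ← Int.toNat_of_nonneg hnonneg, Int.cast_natCast, Nat.floor_natCast]

noncomputable def natNorm : Eisen →* ℕ where
  toFun z := ⌊normSq (z : ℂ)⌋₊
  map_one' := by simp
  map_mul' x y := by
    apply Nat.cast_injective (R := ℝ)
    simp only [Nat.cast_mul, natCast_floor_normSq]
    exact normSq_mul _ _

lemma cast_natNorm (z : Eisen) : (natNorm z : ℝ) = normSq (z : ℂ) := natCast_floor_normSq z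

lemma natNorm_mod_three_ne_two (z : Eisen) : natNorm z % 3 ≠ 2 := by
  obtain ⟨a, b, h⟩ := exists_normSq_eq z
  rw [← cast_natNorm] at h
  have hz : ((natNorm z : ℤ) : ZMod 3) = (a : ZMod 3) ^ 2 - a * b + b ^ 2 := by
    rw [show (natNorm z : ℤ) = a ^ 2 - a * b + b ^ 2 by exact_mod_cast h]
    push_cast
    rfl
  have hZMod : ∀ x y : ZMod 3, x ^ 2 - x * y + y ^ 2 ≠ 2 := by decide
  intro h2
  apply hZMod a b
  rw [← hz, Int.cast_natCast, ← ZMod.natCast_mod, h2]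
  rfl

lemma natNorm_eq_zero {z : Eisen} : natNorm z = 0 ↔ z = 0 := by
  rw [← Nat.cast_inj (R := ℝ), cast_natNorm, Nat.cast_zero, normSq_eq_zero,
    ZeroMemClass.coe_eq_zero]

lemma natNorm_natCast (n : ℕ) : natNorm n = n ^ 2 := by
  rw [← Nat.cast_inj (R := ℝ), cast_natNorm]
  simp [normSq_natCast, sq]

lemma mul_conj (z : Eisen) : z * conj z = natNorm z := by
  apply Subtype.ext
  rw [Subring.coe_mul, coe_conj, Complex.mul_conj, ← cast_natNorm]
  rfl

lemma isUnit_iff_natNorm_eq_one {z : Eisen} : IsUnit z ↔ natNorm z = 1 := by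
  refine ⟨fun h => Nat.isUnit_iff.mp (h.map natNorm), fun h => ?_⟩
  exact IsUnit.of_mul_eq_one (conj z) (by rw [mul_conj, h, Nat.cast_one])

lemma exists_normSq_sub_lt_one (c : ℂ) : ∃ q : Eisen, normSq (c - q) < 1 := by
  set u := c.re + c.im / Real.sqrt 3
  set v := 2 * c.im / Real.sqrt 3
  have hc : c = u + v * ω := by
    apply Complex.ext
    · simp [ω, u, v]
      field_simp
      ring
    · simp [ω, u, v]
      field_simp
  refine ⟨⟨round u + round v * ω, mem_Eisen_iff.mpr ⟨_, _, rfl⟩⟩, ?_⟩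
  have hsub : c - (round u + round v * ω) =
      ((u - round u : ℝ) : ℂ) + ((v - round v : ℝ) : ℂ) * ω := by
    rw [hc]; push_cast; ring
  have hu := abs_le.mp (abs_sub_round u)
  have hv := abs_le.mp (abs_sub_round v)
  rw [hsub, normSq_add_mul_omega]
  nlinarith

noncomputable def roundDiv (x y : Eisen) : Eisen :=
  if y = 0 then 0 else (exists_normSq_sub_lt_one (x / y)).choose

lemma natNorm_sub_mul_roundDiv_lt (x : Eisen) {y : Eisen} (hy : y ≠ 0) :
    natNorm (x - y * roundDiv x y) < natNorm y := by
  have hy' : (y : ℂ) ≠ 0 := by exact_mod_cast hy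
  have hlt := (exists_normSq_sub_lt_one (x / y)).choose_spec
  rw [← Nat.cast_lt (α := ℝ), cast_natNorm, cast_natNorm, roundDiv, if_neg hy]
  calc normSq ((x - y * (exists_normSq_sub_lt_one (x / y)).choose : Eisen) : ℂ)
      = normSq (y : ℂ) * normSq (x / y - (exists_normSq_sub_lt_one (x / y)).choose) := by
        rw [← normSq_mul, mul_sub, mul_div_cancel₀ _ hy']; rfl
    _ < normSq (y : ℂ) := mul_lt_of_lt_one_right (normSq_pos.mpr hy') hlt

noncomputable instance : EuclideanDomain Eisen where
  quotient := roundDiv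
  quotient_zero x := if_pos rfl
  remainder x y := x - y * roundDiv x y
  quotient_mul_add_remainder_eq x y := add_sub_cancel _ _
  r := InvImage (· < ·) natNorm
  r_wellFounded := InvImage.wf _ wellFounded_lt
  remainder_lt x _ hy := natNorm_sub_mul_roundDiv_lt x hy
  mul_left_not_lt x y hy := by
    have : 0 < natNorm y := Nat.pos_of_ne_zero (mt natNorm_eq_zero.mp hy)
    simpa [InvImage, map_mul] using Nat.le_mul_of_pos_right _ this

noncomputable def omega : Eisen := ⟨ω, omega_mem_Eisen⟩

lemma conj_conj (z : Eisen) : conj (conj z) = z := Subtype.ext (Complex.conj_conj _)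

lemma natCast_dvd_conj_iff {n : ℕ} {z : Eisen} :
    (n : Eisen) ∣ conj z ↔ (n : Eisen) ∣ z := by
  refine ⟨fun h => ?_, fun h => ?_⟩
  · simpa [conj_conj] using map_dvd conj h
  · simpa using map_dvd conj h

lemma natNorm_intCast_sub_omega (c : ℤ) :
    (natNorm ((c : Eisen) - omega) : ℤ) = c ^ 2 + c + 1 := by
  have h : (natNorm ((c : Eisen) - omega) : ℝ) = ((c : ℝ) ^ 2 + c + 1 : ℝ) := by
    rw [cast_natNorm]
    have : (((c : Eisen) - omega : Eisen) : ℂ) = ((c : ℝ) : ℂ) + ((-1 : ℝ) : ℂ) * ω := by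
      simp [omega]; ring
    rw [this, normSq_add_mul_omega]; ring
  exact_mod_cast h

lemma natNorm_conj_omega_sub_omega : natNorm (conj omega - omega) = 3 := by
  have h : (natNorm (conj omega - omega) : ℝ) = 3 := by
    rw [cast_natNorm]
    have : ((conj omega - omega : Eisen) : ℂ) = ((-1 : ℝ) : ℂ) + ((-2 : ℝ) : ℂ) * ω := by
      simp [omega, conj_omega]; ring
    rw [this, normSq_add_mul_omega]; norm_num
  exact_mod_cast h

lemma not_prime_natCast {p : ℕ} (hp : p.Prime) (hp3 : p % 3 ≠ 2) : ¬Prime (p : Eisen) := by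
  intro hprime
  obtain ⟨c, hc⟩ := exists_dvd_sq_add_add_one hp hp3
  set ξ := (c : Eisen) - omega
  have hξ : (p : Eisen) ∣ ξ * conj ξ := by
    rw [mul_conj]
    rw [← natNorm_intCast_sub_omega] at hc
    exact Nat.cast_dvd_cast (Int.natCast_dvd_natCast.mp hc)
  have hpξ : (p : Eisen) ∣ ξ := (hprime.dvd_or_dvd hξ).elim id natCast_dvd_conj_iff.mp
  have hdiff : (p : Eisen) ∣ conj omega - omega := by
    have := dvd_sub hpξ (natCast_dvd_conj_iff.mpr hpξ)
    simpa [ξ] using this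
  have h3 := map_dvd natNorm hdiff
  rw [natNorm_natCast, natNorm_conj_omega_sub_omega] at h3
  have := Nat.le_of_dvd (by norm_num) h3
  nlinarith [hp.two_le]

lemma exists_prime_dvd_of_dvd_natNorm {p : ℕ} (hp : p.Prime) {z : Eisen}
    (h : p ∣ natNorm z) : ∃ π : Eisen, Prime π ∧ π ∣ z ∧ π ∣ (p : Eisen) := by
  have hp0 : (p : Eisen) ≠ 0 := by
    rw [Ne, ← natNorm_eq_zero, natNorm_natCast]; exact pow_ne_zero 2 hp.ne_zero
  have hpu : ¬IsUnit (p : Eisen) := by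
    rw [isUnit_iff_natNorm_eq_one, natNorm_natCast]; nlinarith [hp.two_le]
  obtain ⟨π, hπ, hπp⟩ := WfDvdMonoid.exists_irreducible_factor hpu hp0
  have hπ := hπ.prime
  have hzz : π ∣ z * conj z := hπp.trans (by rw [mul_conj]; exact Nat.cast_dvd_cast h)
  rcases hπ.dvd_or_dvd hzz with hz | hz
  · exact ⟨π, hπ, hz, hπp⟩
  · refine ⟨conj π, (MulEquiv.prime_iff conj).mpr hπ, ?_, ?_⟩
    · simpa [conj_conj] using map_dvd conj hz
    · simpa using map_dvd conj hπp

lemma natNorm_eq_or_associated {p : ℕ} (hp : p.Prime) {π : Eisen} (hπ : ¬IsUnit π)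
    (h : π ∣ (p : Eisen)) : natNorm π = p ∨ Associated π (p : Eisen) := by
  obtain ⟨u, hu⟩ := h
  have hnorm : natNorm π * natNorm u = p ^ 2 := by rw [← map_mul, ← hu, natNorm_natCast]
  obtain ⟨k, hk, hπk⟩ := (Nat.dvd_prime_pow hp).mp (Dvd.intro _ hnorm)
  interval_cases k
  · exact absurd (isUnit_iff_natNorm_eq_one.mpr (by simpa using hπk)) hπ
  · exact Or.inl (by simpa using hπk)
  · have hu1 : natNorm u = 1 := by
      rw [hπk] at hnorm
      exact (Nat.mul_eq_left (pow_ne_zero 2 hp.ne_zero)).mp hnorm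
    exact Or.inr ⟨(isUnit_iff_natNorm_eq_one.mpr hu1).unit, hu.symm⟩

lemma natCast_dvd_of_dvd_natNorm {p : ℕ} (hp : p.Prime) (hp3 : p % 3 = 2) {z : Eisen}
    (h : p ∣ natNorm z) : (p : Eisen) ∣ z := by
  obtain ⟨π, hπ, hπz, hπp⟩ := exists_prime_dvd_of_dvd_natNorm hp h
  rcases natNorm_eq_or_associated hp hπ.not_isUnit hπp with hN | hassoc
  · exact absurd (hN ▸ natNorm_mod_three_ne_two π) (by omega)
  · exact hassoc.symm.dvd.trans hπz

lemma exists_dvd_natNorm_eq {p : ℕ} (hp : p.Prime) (hp3 : p % 3 ≠ 2) {z : Eisen}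
    (h : p ∣ natNorm z) : ∃ π : Eisen, π ∣ z ∧ natNorm π = p := by
  obtain ⟨π, hπ, hπz, hπp⟩ := exists_prime_dvd_of_dvd_natNorm hp h
  rcases natNorm_eq_or_associated hp hπ.not_isUnit hπp with hN | hassoc
  · exact ⟨π, hπz, hN⟩
  · exact absurd (hassoc.prime_iff.mp hπ) (not_prime_natCast hp hp3)

def NormSplits (A : ℕ) : Prop :=
  ∀ (z : Eisen) (B : ℕ), natNorm z = A * B →
    ∃ f g : Eisen, z = f * g ∧ natNorm f = A ∧ natNorm g = B

lemma normSplits_one : NormSplits 1 :=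
  fun z B h => ⟨1, z, (one_mul z).symm, map_one natNorm, by rw [h, one_mul]⟩

lemma NormSplits.mul {A₁ A₂ : ℕ} (h₁ : NormSplits A₁) (h₂ : NormSplits A₂) :
    NormSplits (A₁ * A₂) := by
  intro z B hz
  obtain ⟨f₁, g₁, rfl, hf₁, hg₁⟩ := h₁ z (A₂ * B) (by rw [hz, mul_assoc])
  obtain ⟨f₂, g, rfl, hf₂, hg⟩ := h₂ g₁ B hg₁
  exact ⟨f₁ * f₂, g, (mul_assoc _ _ _).symm, by rw [map_mul, hf₁, hf₂], hg⟩

lemma normSplits_of_exists_dvd {A : ℕ} (hA : A ≠ 0)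
    (h : ∀ z : Eisen, A ∣ natNorm z → ∃ f, f ∣ z ∧ natNorm f = A) : NormSplits A := by
  intro z B hz
  obtain ⟨f, ⟨g, rfl⟩, hf⟩ := h z ⟨B, hz⟩
  rw [map_mul, hf] at hz
  exact ⟨f, g, rfl, hf, Nat.eq_of_mul_eq_mul_left (Nat.pos_of_ne_zero hA) hz⟩

lemma normSplits_prime {p : ℕ} (hp : p.Prime) (hp3 : p % 3 ≠ 2) : NormSplits p :=
  normSplits_of_exists_dvd hp.ne_zero fun _ h => exists_dvd_natNorm_eq hp hp3 h

lemma normSplits_prime_sq {p : ℕ} (hp : p.Prime) : NormSplits (p ^ 2) := by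
  by_cases hp3 : p % 3 = 2
  · refine normSplits_of_exists_dvd (pow_ne_zero 2 hp.ne_zero) fun z h => ?_
    exact ⟨p, natCast_dvd_of_dvd_natNorm hp hp3 ((dvd_pow_self p two_ne_zero).trans h),
      natNorm_natCast p⟩
  · rw [sq]
    exact (normSplits_prime hp hp3).mul (normSplits_prime hp hp3)

lemma normSplits_sq {r : ℕ} (hr : r ≠ 0) : NormSplits (r ^ 2) := by
  induction r using induction_on_primes with
  | zero => exact absurd rfl hr
  | one => simpa using normSplits_one
  | prime_mul p a hp ih =>
    rw [mul_pow]
    exact (normSplits_prime_sq hp).mul (ih (right_ne_zero_of_mul hr))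

lemma normSplits_of_forall_not_dvd {t : ℕ}
    (ht : ∀ p : ℕ, p.Prime → p % 3 = 2 → ¬p ∣ t) : NormSplits t := by
  induction t using induction_on_primes with
  | zero => exact absurd (dvd_zero 2) (ht 2 Nat.prime_two rfl)
  | one => exact normSplits_one
  | prime_mul p a hp ih =>
    have hp3 : p % 3 ≠ 2 := fun h => ht p hp h (dvd_mul_right p a)
    exact (normSplits_prime hp hp3).mul
      (ih fun q hq hq3 hqa => ht q hq hq3 (dvd_mul_of_dvd_right hqa p))

end Eisen

theorem stmt_11_general (z : Eisen) (A B : ℕ) (hA : 0 < A)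
    (r t : ℕ) (hrt : A = r ^ 2 * t) (ht : ∀ p : ℕ, p.Prime → p % 3 = 2 → ¬ p ∣ t)
    (hN : Complex.normSq (z : ℂ) = (A : ℝ) * B) :
    ∃ f g : Eisen, z = f * g ∧ Complex.normSq (f : ℂ) = A ∧ Complex.normSq (g : ℂ) = B := by
  have hr : r ≠ 0 := by rintro rfl; simp [hrt] at hA
  have hsplit : Eisen.NormSplits A :=
    hrt ▸ (Eisen.normSplits_sq hr).mul (Eisen.normSplits_of_forall_not_dvd ht)
  have hz : Eisen.natNorm z = A * B := by exact_mod_cast (Eisen.cast_natNorm z).trans hN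
  obtain ⟨f, g, hfg, hf, hg⟩ := hsplit z B hz
  exact ⟨f, g, hfg, by rw [← Eisen.cast_natNorm, hf], by rw [← Eisen.cast_natNorm, hg]⟩

theorem stmt_11 (z : Eisen) (A B : ℕ) (hA : 0 < A) (hB : 0 < B)
    (r t : ℕ) (hrt : A = r ^ 2 * t) (ht : ∀ p : ℕ, p.Prime → p % 3 = 2 → ¬ p ∣ t)
    (hN : Complex.normSq (z : ℂ) = (A : ℝ) * B) :
    ∃ f g : Eisen, z = f * g ∧ Complex.normSq (f : ℂ) = A ∧ Complex.normSq (g : ℂ) = B :=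
  stmt_11_general z A B hA r t hrt ht hN
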